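/- Verification of the comparable-curvature condition for logistic regression: assume sup_{t∈ℕ} ‖x_t‖₂ · r ≤ C₇ and sup_{t∈ℕ} ‖x_t‖₂ ≤ C₈ for constants C₇, C₈ > 0. Then there exists a constant K > 0 depending only on C₇, C₈ such that for every t ∈ ℕ and every θ₁, θ₂ ∈ Θ_r there exists a point θ̃ on the segment between θ₁ and θ₂ (hence θ̃ ∈ Θ_r) with ℓ_t(θ₁) = ℓ_t(θ₂) + ⟨∇ℓ_t(θ₂), θ₁ − θ₂⟩ + ½(θ₁ − θ₂)ᵀ∇²ℓ_t(θ̃)(θ₁ − θ₂) and ∇²ℓ_t(θ₁) ⪯ (1 + K‖θ₁ − θ₂‖₂) ∇²ℓ_t(θ̃). Moreover sup_{t∈ℕ} sup_{θ∈Θ_r} ‖∇²ℓ_t(θ)‖₂ ≤ C₈²/4. -/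

import Mathlib

open Matrix Real
open scoped RealInnerProductSpace BigOperators

noncomputable section

/-- Vectors in `ℝ^p` with the Euclidean (`ℓ²`) norm. -/
abbrev Vec (p : ℕ) := EuclideanSpace ℝ (Fin p)

/-- Real `p × p` matrices. -/
abbrev Mat (p : ℕ) := Matrix (Fin p) (Fin p) ℝ

/-- A matrix applied to a Euclidean vector. -/
def mApp {p : ℕ} (A : Mat p) (v : Vec p) : Vec p := Matrix.toEuclideanLin A v

/-- The quadratic form `vᵀ A v`. -/
def quadForm {p : ℕ} (A : Mat p) (v : Vec p) : ℝ := ⟪v, mApp A v⟫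

/-- The `ℓ² → ℓ²` operator (spectral) norm of a matrix. -/
def specNorm {p : ℕ} (A : Mat p) : ℝ :=
  ‖LinearMap.toContinuousLinearMap (Matrix.toEuclideanLin A)‖

/-- The outer product `v vᵀ`. -/
def outer {p : ℕ} (v : Vec p) : Mat p :=
  Matrix.vecMulVec (fun i => v i) (fun i => v i)

/-- The logistic log-partition function `b(η) = log(1 + e^η)`. -/
def logisticB (η : ℝ) : ℝ := Real.log (1 + Real.exp η)

/-- Its first derivative `b'(η) = e^η/(1 + e^η)`. -/
def logisticB' (η : ℝ) : ℝ := Real.exp η / (1 + Real.exp η)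

/-- Its second derivative (logistic variance function)
`b''(η) = e^η/(1 + e^η)²`. -/
def logisticB'' (η : ℝ) : ℝ := Real.exp η / (1 + Real.exp η) ^ 2

/-- The Hessian `∇²ℓ_t(θ) = b''(x_tᵀθ) x_t x_tᵀ` of the logistic loss. -/
def logisticHess {p : ℕ} (xv : Vec p) (θ : Vec p) : Mat p :=
  logisticB'' ⟪xv, θ⟫ • outer xv

/-! ### Auxiliary lemmas -/

lemma mApp_smul {p : ℕ} (γ : ℝ) (A : Mat p) (v : Vec p) :
    mApp (γ • A) v = γ • mApp A v := by
  simp [mApp, _root_.map_smul]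

lemma mApp_outer {p : ℕ} (x v : Vec p) : mApp (outer x) v = ⟪x, v⟫ • x := by
  ext i
  simp [mApp, Matrix.toEuclideanLin_apply, outer, Matrix.mulVec, Matrix.vecMulVec_apply,
    dotProduct, PiLp.inner_apply, RCLike.inner_apply, Finset.mul_sum, Finset.sum_mul]
  exact Finset.sum_congr rfl fun j _ => by ring

lemma quadForm_smul_outer {p : ℕ} (γ : ℝ) (x v : Vec p) :
    quadForm (γ • outer x) v = γ * ⟪x, v⟫ ^ 2 := by
  rw [quadForm, mApp_smul, mApp_outer, real_inner_smul_right, real_inner_smul_right,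
    real_inner_comm]
  ring

lemma posSemidef_smul_outer {p : ℕ} {γ : ℝ} (hγ : 0 ≤ γ) (x : Vec p) :
    (γ • outer x).PosSemidef := by
  refine Matrix.PosSemidef.of_dotProduct_mulVec_nonneg ?_ ?_
  · unfold Matrix.IsHermitian
    ext i j
    simp only [outer, Matrix.conjTranspose_apply, Matrix.vecMulVec_apply, Matrix.smul_apply,
      star_trivial, smul_eq_mul]
    ring
  · intro v
    have hmv : (γ • outer x) *ᵥ v = fun i => γ * (x i * (dotProduct (fun i => x i) v)) := by
      ext i
      simp [outer, Matrix.mulVec, Matrix.vecMulVec_apply, dotProduct, Finset.mul_sum]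
      exact Finset.sum_congr rfl fun j _ => by ring
    rw [hmv]
    have : dotProduct (star v) (fun i => γ * (x i * dotProduct (fun i => x i) v))
        = γ * (dotProduct (fun i => x i) v) ^ 2 := by
      simp only [dotProduct, Pi.star_apply, star_trivial, Finset.mul_sum]
      rw [sq, Finset.sum_mul_sum, Finset.mul_sum]
      refine Finset.sum_congr rfl fun i _ => ?_
      rw [Finset.mul_sum]
      exact Finset.sum_congr rfl fun j _ => by ring
    rw [this]
    positivity

lemma specNorm_smul_outer_le {p : ℕ} {γ C : ℝ} (hγ0 : 0 ≤ γ) (hγ : γ ≤ 1/4) (x : Vec p)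
    (hx : ‖x‖ ≤ C) (hC : 0 ≤ C) :
    specNorm (γ • outer x) ≤ C ^ 2 / 4 := by
  rw [specNorm]
  apply ContinuousLinearMap.opNorm_le_bound _ (by positivity)
  intro v
  have : (LinearMap.toContinuousLinearMap (Matrix.toEuclideanLin (γ • outer x))) v
      = γ • (⟪x, v⟫ • x) := by
    rw [LinearMap.coe_toContinuousLinearMap']
    rw [show (Matrix.toEuclideanLin (γ • outer x)) v = mApp (γ • outer x) v from rfl,
      mApp_smul, mApp_outer]
  rw [this, norm_smul, norm_smul]
  simp only [Real.norm_eq_abs, abs_of_nonneg hγ0]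
  have h1 : |⟪x, v⟫| ≤ ‖x‖ * ‖v‖ := abs_real_inner_le_norm x v
  have h2 : (0:ℝ) ≤ ‖x‖ := norm_nonneg x
  have h3 : (0:ℝ) ≤ ‖v‖ := norm_nonneg v
  have h4 : (0:ℝ) ≤ |⟪x,v⟫| := abs_nonneg _
  nlinarith [mul_le_mul_of_nonneg_right h1 h2, mul_le_mul hx hx h2 hC,
    mul_nonneg h4 h2, mul_nonneg (mul_nonneg h2 h3) h2, mul_nonneg h2 h3]

lemma one_add_exp_pos (η : ℝ) : (0:ℝ) < 1 + Real.exp η := by positivity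

lemma hasDerivAt_logisticB (η : ℝ) : HasDerivAt logisticB (logisticB' η) η := by
  have h : HasDerivAt (fun t => 1 + Real.exp t) (Real.exp η) η :=
    (Real.hasDerivAt_exp η).const_add 1
  rw [show logisticB = fun t => Real.log (1 + Real.exp t) from rfl]
  simpa [logisticB, logisticB'] using h.log (one_add_exp_pos η).ne'

lemma hasDerivAt_logisticB' (η : ℝ) : HasDerivAt logisticB' (logisticB'' η) η := by
  have h : HasDerivAt (fun t => 1 + Real.exp t) (Real.exp η) η :=
    (Real.hasDerivAt_exp η).const_add 1
  have := (Real.hasDerivAt_exp η).div h (one_add_exp_pos η).ne'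
  exact this.congr_deriv (by unfold logisticB''; congr 1; ring)

lemma logisticB''_nonneg (η : ℝ) : 0 ≤ logisticB'' η := by
  unfold logisticB''; positivity

lemma logisticB''_le (η : ℝ) : logisticB'' η ≤ 1/4 := by
  rw [logisticB'', div_le_iff₀ (by positivity)]
  nlinarith [Real.exp_pos η, sq_nonneg (1 - Real.exp η)]

lemma one_add_exp_le (u v : ℝ) : 1 + Real.exp v ≤ Real.exp |v - u| * (1 + Real.exp u) := by
  rcases le_total v u with h | h
  · have h1 : Real.exp v ≤ Real.exp u := Real.exp_le_exp.2 h
    have h2 : (1:ℝ) ≤ Real.exp |v - u| := Real.one_le_exp (abs_nonneg _)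
    nlinarith [Real.exp_pos u]
  · have habs : |v - u| = v - u := abs_of_nonneg (by linarith)
    have h2 : (1:ℝ) ≤ Real.exp (v - u) := Real.one_le_exp (by linarith)
    have h3 : Real.exp (v - u) * Real.exp u = Real.exp v := by
      rw [← Real.exp_add]; ring_nf
    rw [habs]; nlinarith

lemma logisticB''_ratio (η₁ η₂ : ℝ) :
    logisticB'' η₁ ≤ Real.exp (3 * |η₁ - η₂|) * logisticB'' η₂ := by
  rw [logisticB'', logisticB'', ← mul_div_assoc, div_le_div_iff₀ (by positivity) (by positivity)]
  have h1 : Real.exp η₁ ≤ Real.exp |η₁ - η₂| * Real.exp η₂ := by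
    rw [← Real.exp_add]
    exact Real.exp_le_exp.2 (by cases abs_cases (η₁ - η₂) <;> linarith)
  have h2 : 1 + Real.exp η₂ ≤ Real.exp |η₂ - η₁| * (1 + Real.exp η₁) := one_add_exp_le η₁ η₂
  rw [abs_sub_comm] at h2
  have h3 : Real.exp (3 * |η₁ - η₂|)
      = Real.exp |η₁ - η₂| * (Real.exp |η₁ - η₂| * Real.exp |η₁ - η₂|) := by
    rw [← Real.exp_add, ← Real.exp_add]; ring_nf
  have e1 := Real.exp_pos η₁
  have e2 := Real.exp_pos η₂
  have e3 := Real.exp_pos |η₁ - η₂|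
  have key : (1 + Real.exp η₂)^2 ≤ (Real.exp |η₁ - η₂|)^2 * (1 + Real.exp η₁)^2 := by
    nlinarith [one_add_exp_pos η₁, one_add_exp_pos η₂]
  calc Real.exp η₁ * (1 + Real.exp η₂)^2
      ≤ Real.exp η₁ * ((Real.exp |η₁ - η₂|)^2 * (1 + Real.exp η₁)^2) :=
        mul_le_mul_of_nonneg_left key e1.le
    _ ≤ (Real.exp |η₁ - η₂| * Real.exp η₂) * ((Real.exp |η₁ - η₂|)^2 * (1 + Real.exp η₁)^2) :=
        mul_le_mul_of_nonneg_right h1 (by positivity)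
    _ = Real.exp (3 * |η₁ - η₂|) * Real.exp η₂ * (1 + Real.exp η₁)^2 := by rw [h3]; ring

lemma exp_le_linear {u M : ℝ} (hu : 0 ≤ u) (huM : u ≤ M) (hM : 0 < M) :
    Real.exp u ≤ 1 + (Real.exp M - 1) / M * u := by
  have h := convexOn_exp.2 (Set.mem_univ (0:ℝ)) (Set.mem_univ M)
    (show (0:ℝ) ≤ 1 - u/M by rw [sub_nonneg]; exact div_le_one_of_le₀ huM hM.le)
    (show (0:ℝ) ≤ u/M by positivity) (by ring)
  simp only [smul_eq_mul, mul_zero, zero_add, Real.exp_zero, mul_one] at h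
  have hx : u / M * M = u := div_mul_cancel₀ u hM.ne'
  rw [hx] at h
  calc Real.exp u ≤ (1 - u/M) + u/M * Real.exp M := h
    _ = 1 + (Real.exp M - 1)/M * u := by field_simp; ring

lemma taylor2 (a m yc : ℝ) :
    ∃ c ∈ Set.Icc (0:ℝ) 1,
      logisticB (a + m) - yc * (a + m)
        = (logisticB a - yc * a) + (logisticB' a - yc) * m
          + (1/2) * (logisticB'' (a + c * m) * m ^ 2) := by
  set g : ℝ → ℝ := fun s => logisticB (a + s * m) - yc * (a + s * m) with hgdef
  set g' : ℝ → ℝ := fun s => (logisticB' (a + s * m) - yc) * m with hg'def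
  set g'' : ℝ → ℝ := fun s => logisticB'' (a + s * m) * m ^ 2 with hg''def
  have hu : ∀ s : ℝ, HasDerivAt (fun t : ℝ => a + t * m) m s := fun s => by
    simpa using ((hasDerivAt_id s).mul_const m).const_add a
  have hg : ∀ s, HasDerivAt g (g' s) s := fun s => by
    have h := ((hasDerivAt_logisticB (a + s * m)).comp s (hu s)).sub ((hu s).const_mul yc)
    have e : logisticB' (a + s * m) * m - yc * m = g' s := by simp only [hg'def]; ring
    rw [e] at h; exact h
  have hg' : ∀ s, HasDerivAt g' (g'' s) s := fun s => by
    have h := (((hasDerivAt_logisticB' (a + s * m)).comp s (hu s)).sub_const yc).mul_const m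
    have e : logisticB'' (a + s * m) * m * m = g'' s := by simp only [hg''def]; ring
    rw [e] at h; exact h
  set A : ℝ := g 1 - g 0 - g' 0 with hA
  set F : ℝ → ℝ := fun s => g 1 - g s - (1 - s) * g' s - A * (1 - s) ^ 2 with hF
  have hFd : ∀ s, HasDerivAt F ((1 - s) * (2 * A - g'' s)) s := fun s => by
    have h1s : HasDerivAt (fun t : ℝ => 1 - t) (-1) s := by
      simpa using (hasDerivAt_id s).const_sub 1
    have hmul : HasDerivAt (fun t : ℝ => (1 - t) * g' t)
        ((-1) * g' s + (1 - s) * g'' s) s := h1s.mul (hg' s)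
    have hsq : HasDerivAt (fun t : ℝ => A * (1 - t) ^ 2)
        (A * (2 * (1 - s) ^ 1 * (-1))) s := (h1s.pow 2).const_mul A
    have := ((hasDerivAt_const s (g 1)).sub (hg s)).sub hmul |>.sub hsq
    exact this.congr_deriv (by ring)
  have hF0 : F 0 = F 1 := by simp only [hF, hA]; ring
  have hcont : ContinuousOn F (Set.Icc 0 1) :=
    fun s _ => (hFd s).continuousAt.continuousWithinAt
  obtain ⟨c, hc, hc0⟩ := exists_hasDerivAt_eq_zero (by norm_num : (0:ℝ) < 1) hcont hF0
    (fun s _ => hFd s)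
  refine ⟨c, Set.mem_Icc_of_Ioo hc, ?_⟩
  have hc1 : (1 : ℝ) - c ≠ 0 := by have := hc.2; intro h; linarith
  have hgc : g'' c = 2 * A := by
    rcases mul_eq_zero.1 hc0 with h | h
    · exact absurd h hc1
    · linarith
  have hg1 : g 1 = g 0 + g' 0 + (1/2) * g'' c := by
    rw [hgc]; simp only [hA]; ring
  simpa [hgdef, hg'def, hg''def] using hg1

/-- verification of the comparable-curvature condition (A2)
for logistic regression (Proposition 5 of the paper).  Here
`ℓ_t(θ) = b(x_tᵀθ) − y_t x_tᵀθ`, `∇ℓ_t(θ) = (b'(x_tᵀθ) − y_t) x_t`,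
`∇²ℓ_t(θ) = b''(x_tᵀθ) x_t x_tᵀ`, and `A ⪯ B` is `(B − A).PosSemidef`. -/
theorem stmt13 :
    ∀ C₇ C₈ : ℝ, 0 < C₇ → 0 < C₈ →
    ∃ K : ℝ, 0 < K ∧
    ∀ (p : ℕ) (xv : ℕ → Vec p) (y : ℕ → ℝ) (θstar : Vec p) (r : ℝ),
      0 < r →
      (∀ t : ℕ, ‖xv t‖ * r ≤ C₇) →
      (∀ t : ℕ, ‖xv t‖ ≤ C₈) →
      (∀ (t : ℕ) (θ₁ θ₂ : Vec p), ‖θ₁ - θstar‖ ≤ r → ‖θ₂ - θstar‖ ≤ r →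
        ∃ c ∈ Set.Icc (0 : ℝ) 1,
          (logisticB ⟪xv t, θ₁⟫ - y t * ⟪xv t, θ₁⟫
            = logisticB ⟪xv t, θ₂⟫ - y t * ⟪xv t, θ₂⟫
              + ⟪(logisticB' ⟪xv t, θ₂⟫ - y t) • xv t, θ₁ - θ₂⟫
              + (1 / 2) *
                  quadForm (logisticHess (xv t) (θ₂ + c • (θ₁ - θ₂))) (θ₁ - θ₂)) ∧
          ((1 + K * ‖θ₁ - θ₂‖) • logisticHess (xv t) (θ₂ + c • (θ₁ - θ₂))
            - logisticHess (xv t) θ₁).PosSemidef) ∧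
      (∀ (t : ℕ) (θ' : Vec p), ‖θ' - θstar‖ ≤ r →
        specNorm (logisticHess (xv t) θ') ≤ C₈ ^ 2 / 4) := by
  intro C₇ C₈ hC₇ hC₈
  have hexpC : 1 < Real.exp (6 * C₇) := by
    rw [show (1:ℝ) = Real.exp 0 from (Real.exp_zero).symm]
    exact Real.exp_lt_exp.2 (by linarith)
  refine ⟨(Real.exp (6 * C₇) - 1) * C₈ / (2 * C₇),
    div_pos (mul_pos (by linarith) hC₈) (by linarith), ?_⟩
  set K : ℝ := (Real.exp (6 * C₇) - 1) * C₈ / (2 * C₇) with hK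
  intro p xv y θstar r hr hxr hx8
  constructor
  · intro t θ₁ θ₂ h1 h2
    obtain ⟨c, hc, heq⟩ := taylor2 ⟪xv t, θ₂⟫ ⟪xv t, θ₁ - θ₂⟫ (y t)
    have hθ1 : ⟪xv t, θ₁⟫ = ⟪xv t, θ₂⟫ + ⟪xv t, θ₁ - θ₂⟫ := by
      rw [inner_sub_right]; ring
    have hθc : ⟪xv t, θ₂ + c • (θ₁ - θ₂)⟫ = ⟪xv t, θ₂⟫ + c * ⟪xv t, θ₁ - θ₂⟫ := by
      rw [inner_add_right, real_inner_smul_right]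
    refine ⟨c, hc, ?_, ?_⟩
    · have hgrad : ⟪(logisticB' ⟪xv t, θ₂⟫ - y t) • xv t, θ₁ - θ₂⟫
          = (logisticB' ⟪xv t, θ₂⟫ - y t) * ⟪xv t, θ₁ - θ₂⟫ := real_inner_smul_left _ _ _
      have hquad : quadForm (logisticHess (xv t) (θ₂ + c • (θ₁ - θ₂))) (θ₁ - θ₂)
          = logisticB'' (⟪xv t, θ₂⟫ + c * ⟪xv t, θ₁ - θ₂⟫) * ⟪xv t, θ₁ - θ₂⟫ ^ 2 := by
        rw [logisticHess, quadForm_smul_outer, hθc]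
      rw [hθ1, hgrad, hquad]
      linarith [heq]
    · have hmat : (1 + K * ‖θ₁ - θ₂‖) • logisticHess (xv t) (θ₂ + c • (θ₁ - θ₂))
          - logisticHess (xv t) θ₁
          = ((1 + K * ‖θ₁ - θ₂‖)
                * logisticB'' (⟪xv t, θ₂⟫ + c * ⟪xv t, θ₁ - θ₂⟫)
              - logisticB'' (⟪xv t, θ₂⟫ + ⟪xv t, θ₁ - θ₂⟫)) • outer (xv t) := by
        rw [logisticHess, logisticHess, hθc, hθ1, smul_smul, sub_smul]
      rw [hmat]
      apply posSemidef_smul_outer _ (xv t)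
      rw [sub_nonneg]
      -- notation
      set a : ℝ := ⟪xv t, θ₂⟫
      set m : ℝ := ⟪xv t, θ₁ - θ₂⟫ with hm
      have hΔ : |(a + m) - (a + c * m)| ≤ |m| := by
        have : (a + m) - (a + c * m) = (1 - c) * m := by ring
        rw [this, abs_mul, abs_of_nonneg (by linarith [hc.2] : (0:ℝ) ≤ 1 - c)]
        nlinarith [abs_nonneg m, hc.1, hc.2]
      have hmx : |m| ≤ ‖xv t‖ * ‖θ₁ - θ₂‖ := by
        rw [hm]; exact abs_real_inner_le_norm _ _
      have hd2r : ‖θ₁ - θ₂‖ ≤ 2 * r := by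
        have he : θ₁ - θ₂ = (θ₁ - θstar) - (θ₂ - θstar) := by abel
        rw [he]
        exact (norm_sub_le _ _).trans (by linarith)
      have hxnn : (0:ℝ) ≤ ‖xv t‖ := norm_nonneg _
      have hdnn : (0:ℝ) ≤ ‖θ₁ - θ₂‖ := norm_nonneg _
      have hmC8 : |m| ≤ C₈ * ‖θ₁ - θ₂‖ :=
        hmx.trans (mul_le_mul_of_nonneg_right (hx8 t) hdnn)
      have h3Δ : 3 * |(a + m) - (a + c * m)| ≤ 6 * C₇ := by
        have hxd : ‖xv t‖ * ‖θ₁ - θ₂‖ ≤ 2 * C₇ := by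
          calc ‖xv t‖ * ‖θ₁ - θ₂‖ ≤ ‖xv t‖ * (2 * r) :=
                mul_le_mul_of_nonneg_left hd2r hxnn
            _ = 2 * (‖xv t‖ * r) := by ring
            _ ≤ 2 * C₇ := by linarith [hxr t]
        linarith [hΔ.trans hmx]
      have hexp := exp_le_linear (u := 3 * |(a + m) - (a + c * m)|) (M := 6 * C₇)
        (by linarith [abs_nonneg ((a + m) - (a + c * m))]) h3Δ (by linarith)
      have hcoef : (0:ℝ) ≤ (Real.exp (6 * C₇) - 1) / (6 * C₇) := div_nonneg (by linarith) (by linarith)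
      have hcu : (Real.exp (6 * C₇) - 1) / (6 * C₇) * (3 * |(a + m) - (a + c * m)|)
          ≤ K * ‖θ₁ - θ₂‖ := by
        have h1 : 3 * |(a + m) - (a + c * m)| ≤ 3 * (C₈ * ‖θ₁ - θ₂‖) := by
          have := hΔ.trans hmC8; linarith
        have h2 : (Real.exp (6 * C₇) - 1) / (6 * C₇) * (3 * (C₈ * ‖θ₁ - θ₂‖))
            = K * ‖θ₁ - θ₂‖ := by
          rw [hK]; field_simp; ring
        calc (Real.exp (6 * C₇) - 1) / (6 * C₇) * (3 * |(a + m) - (a + c * m)|)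
            ≤ (Real.exp (6 * C₇) - 1) / (6 * C₇) * (3 * (C₈ * ‖θ₁ - θ₂‖)) :=
              mul_le_mul_of_nonneg_left h1 hcoef
          _ = K * ‖θ₁ - θ₂‖ := h2
      have hratio := logisticB''_ratio (a + m) (a + c * m)
      have hfin : Real.exp (3 * |(a + m) - (a + c * m)|) ≤ 1 + K * ‖θ₁ - θ₂‖ := by
        linarith
      calc logisticB'' (a + m)
          ≤ Real.exp (3 * |(a + m) - (a + c * m)|) * logisticB'' (a + c * m) := hratio
        _ ≤ (1 + K * ‖θ₁ - θ₂‖) * logisticB'' (a + c * m) :=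
            mul_le_mul_of_nonneg_right hfin (logisticB''_nonneg _)
  · intro t θ' _
    rw [logisticHess]
    exact specNorm_smul_outer_le (logisticB''_nonneg _) (logisticB''_le _) (xv t)
      (hx8 t) hC₈.le
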